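/- arXiv:1204.1958 — 7 statements merged into one kernel-verified Lean document; each statement's English description precedes it below -/
import Mathlib

section
/- Every permutation of a finite set can be written as the product of two involutions. -/
/-!
Choose a base point `c` on every cycle of `σ` and let `τ` reflect each cycle about its base
point, `τ (σ ^ k c) = σ ^ (-k) c`; this is well defined because `σ ^ j c = σ ^ k c` forces
`σ ^ (-j) c = σ ^ (-k) c`. Then `τ` and `σ * τ`, which sends `σ ^ k c` to `σ ^ (1 - k) c`, are
both involutions, and `σ = (σ * τ) * τ`.
-/

namespace Equiv.Perm

variable {α : Type*} (σ : Perm α)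

theorem mul_self_eq_one_iff_involutive {τ : Perm α} : τ * τ = 1 ↔ Function.Involutive τ :=
  Perm.ext_iff

theorem zpow_neg_apply_eq_of_zpow_apply_eq {j k : ℤ} {x : α} (h : (σ ^ j) x = (σ ^ k) x) :
    (σ ^ (-j)) x = (σ ^ (-k)) x :=
  calc (σ ^ (-j)) x = (σ ^ (-j - k)) ((σ ^ k) x) := by rw [← mul_apply, ← zpow_add]; ring_nf
    _ = (σ ^ (-k)) x := by rw [← h, ← mul_apply, ← zpow_add]; ring_nf

noncomputable def cycleBase (y : α) : α :=
  (Quotient.mk (SameCycle.setoid σ) y).out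

theorem sameCycle_cycleBase (y : α) : σ.SameCycle (σ.cycleBase y) y :=
  Quotient.mk_out (s := SameCycle.setoid σ) y

theorem cycleBase_eq_of_sameCycle {x y : α} (h : σ.SameCycle x y) :
    σ.cycleBase x = σ.cycleBase y :=
  congrArg Quotient.out (Quotient.sound h)

theorem cycleBase_zpow_apply_cycleBase (x : α) (k : ℤ) :
    σ.cycleBase ((σ ^ k) (σ.cycleBase x)) = σ.cycleBase x :=
  calc σ.cycleBase ((σ ^ k) (σ.cycleBase x)) = σ.cycleBase (σ.cycleBase x) :=
        σ.cycleBase_eq_of_sameCycle ⟨-k, by simp⟩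
    _ = σ.cycleBase x := σ.cycleBase_eq_of_sameCycle (σ.sameCycle_cycleBase x)

noncomputable def cycleReflection (y : α) : α :=
  (σ ^ (-(σ.sameCycle_cycleBase y).choose)) (σ.cycleBase y)

theorem cycleReflection_eq_of_zpow_apply_cycleBase {y : α} {k : ℤ}
    (h : (σ ^ k) (σ.cycleBase y) = y) :
    σ.cycleReflection y = (σ ^ (-k)) (σ.cycleBase y) :=
  σ.zpow_neg_apply_eq_of_zpow_apply_eq ((σ.sameCycle_cycleBase y).choose_spec.trans h.symm)

theorem cycleReflection_zpow_apply_cycleBase (x : α) (k : ℤ) :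
    σ.cycleReflection ((σ ^ k) (σ.cycleBase x)) = (σ ^ (-k)) (σ.cycleBase x) := by
  have h := σ.cycleReflection_eq_of_zpow_apply_cycleBase (y := (σ ^ k) (σ.cycleBase x)) (k := k)
  rw [cycleBase_zpow_apply_cycleBase] at h
  exact h rfl

theorem cycleReflection_involutive : Function.Involutive σ.cycleReflection := by
  intro y
  obtain ⟨k, hk⟩ := σ.sameCycle_cycleBase y
  rw [← hk, cycleReflection_zpow_apply_cycleBase, cycleReflection_zpow_apply_cycleBase, neg_neg]

theorem involutive_comp_cycleReflection : Function.Involutive (σ ∘ σ.cycleReflection) := by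
  have hσ (k : ℤ) (c : α) : σ ((σ ^ k) c) = (σ ^ (1 + k)) c := by
    rw [zpow_add, zpow_one, mul_apply]
  intro y
  obtain ⟨k, hk⟩ := σ.sameCycle_cycleBase y
  rw [← hk]
  simp only [Function.comp_apply, cycleReflection_zpow_apply_cycleBase, hσ]
  rw [neg_add, neg_neg, add_neg_cancel_left]

end Equiv.Perm

theorem perm_eq_prod_two_involutions_general {α : Type*} (σ : Equiv.Perm α) :
    ∃ τ₁ τ₂ : Equiv.Perm α, τ₁ * τ₁ = 1 ∧ τ₂ * τ₂ = 1 ∧ σ = τ₁ * τ₂ := by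
  let τ := Function.Involutive.toPerm _ σ.cycleReflection_involutive
  have hτ : τ * τ = 1 := Equiv.Perm.mul_self_eq_one_iff_involutive.2 σ.cycleReflection_involutive
  refine ⟨σ * τ, τ, ?_, hτ, by rw [mul_assoc, hτ, mul_one]⟩
  exact Equiv.Perm.mul_self_eq_one_iff_involutive.2 σ.involutive_comp_cycleReflection

/-- Every permutation of a finite set is a product of two involutions. -/
theorem perm_eq_prod_two_involutions {α : Type*} [Fintype α] (σ : Equiv.Perm α) :
    ∃ τ₁ τ₂ : Equiv.Perm α, τ₁ * τ₁ = 1 ∧ τ₂ * τ₂ = 1 ∧ σ = τ₁ * τ₂ :=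
  perm_eq_prod_two_involutions_general σ
end

section
/- For n > 2, the cyclic permutation C_n of {0,...,n-1} has exactly n factorizations as a product of two involutions; i.e., if C_n = S ∘ T with S, T involutions, then there exists k with 0 ≤ k < n such that S(x) = k - x (mod n) and T(x) = (k-1) - x (mod n). -/
/-!
If `C = S * T` with `S`, `T` involutions, then `T = S * C` and `(S * C)² = 1` says that `S`
conjugates `C` to `C⁻¹`: `S (x + 1) = S x - 1`. Since `1` generates `ZMod n`, this forces
`S x = S 0 - x`, and then `T x = S (x + 1) = (S 0 - 1) - x`.
-/

section Involutions

variable {G : Type*} [Group G] {S T c : G}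

theorem eq_mul_of_mul_eq_of_mul_self_eq_one (hS : S * S = 1) (h : S * T = c) : T = S * c := by
  rw [← h, ← mul_assoc, hS, one_mul]

theorem mul_eq_inv_mul_of_mul_eq_of_involutions (hS : S * S = 1) (hT : T * T = 1)
    (h : S * T = c) : S * c = c⁻¹ * S := by
  rw [eq_mul_of_mul_eq_of_mul_self_eq_one hS h, mul_eq_one_iff_eq_inv, mul_inv_rev] at hT
  rwa [← eq_inv_of_mul_eq_one_left hS] at hT

end Involutions

theorem apply_intCast_eq_of_apply_add_one {R : Type*} [AddCommGroupWithOne R] {f : R → R}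
    (hf : ∀ x, f (x + 1) = f x - 1) (m : ℤ) : f m = f 0 - m := by
  induction m using Int.induction_on with
  | zero => simp
  | succ m ih =>
    rw [Int.cast_add, Int.cast_one, hf, ih]
    abel
  | pred m ih =>
    have hstep := hf ((-m - 1 : ℤ) : R)
    rw [Int.cast_sub, Int.cast_one] at hstep ⊢
    rw [sub_add_cancel, ih] at hstep
    rw [sub_eq_iff_eq_add.mp hstep.symm]
    abel

theorem cycle_factorization_unique_general (n : ℕ) (S T : Equiv.Perm (ZMod n))
    (hS : S * S = 1) (hT : T * T = 1)
    (h : S * T = Equiv.addRight (1 : ZMod n)) :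
    ∃ k : ZMod n, (∀ x, S x = k - x) ∧ (∀ x, T x = (k - 1) - x) := by
  have hconj := mul_eq_inv_mul_of_mul_eq_of_involutions hS hT h
  have hshift : ∀ x, S (x + 1) = S x - 1 := fun x => by
    simpa [Equiv.Perm.mul_apply, Equiv.Perm.inv_def, sub_eq_add_neg] using congr($hconj x)
  have hS_eq : ∀ x, S x = S 0 - x := fun x => by
    obtain ⟨m, rfl⟩ := ZMod.intCast_surjective x
    exact apply_intCast_eq_of_apply_add_one hshift m
  refine ⟨S 0, hS_eq, fun x => ?_⟩
  rw [eq_mul_of_mul_eq_of_mul_self_eq_one hS h, Equiv.Perm.mul_apply, Equiv.coe_addRight,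
    hS_eq, sub_add_eq_sub_sub_swap]

/-- For `n > 2`, every factorization of the cycle `C_n : x ↦ x + 1` on `ZMod n`
as a product `S * T` of two involutions has the form `S = I_k`, `T = I_{k-1}`
for some `k`, where `I_k x = k - x`. -/
theorem cycle_factorization_unique (n : ℕ) (hn : 2 < n) (S T : Equiv.Perm (ZMod n))
    (hS : S * S = 1) (hT : T * T = 1)
    (h : S * T = Equiv.addRight (1 : ZMod n)) :
    ∃ k : ZMod n, (∀ x, S x = k - x) ∧ (∀ x, T x = (k - 1) - x) :=
  cycle_factorization_unique_general n S T hS hT h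
end

section
/- For k ≥ 2, n ≥ 1, and every i with 0 ≤ i < k^n − 1, the composition rev_n(rev_{n-1}(i)) equals k·i mod (k^n − 1). Moreover if i has leading base-k digit j (i.e., j = ⌊i/k^{n-1}⌋), then rev_n(rev_{n-1}(i)) = k·i − j·(k^n − 1). -/
/-- `revP k p i` reverses the `p` least significant base-`k` digits of `i`. -/
def revP (k p i : ℕ) : ℕ :=
  (i / k ^ p) * k ^ p + ∑ j ∈ Finset.range p, (i / k ^ j % k) * k ^ (p - 1 - j)

/-!
Write `i = j·k^p + r` with `r < k^p`. Then `rev_p` keeps `j` and reverses the digits of `r`, and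
`rev_{p+1}` reverses the digit string `j, rev(r)` into `rev(rev(r)), j = r, j`: the composite is the
cyclic rotation `i ↦ k·r + j` of the `p + 1` digits of `i`. Since `k·i = j·(k^{p+1} - 1) + (k·r + j)`,
the rotation is `k·i mod (k^{p+1} - 1)` as soon as `k·r + j < k^{p+1} - 1`, which fails only for the
all-`(k-1)` string `i = k^{p+1} - 1`.
-/

def digitRev (k p x : ℕ) : ℕ := ∑ j ∈ Finset.range p, (x / k ^ j % k) * k ^ (p - 1 - j)

theorem revP_eq (k p i : ℕ) : revP k p i = i / k ^ p * k ^ p + digitRev k p i := rfl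

theorem digitRev_mod_pow (k p x : ℕ) : digitRev k p (x % k ^ p) = digitRev k p x := by
  refine Finset.sum_congr rfl fun t ht => ?_
  have hdvd : k ^ t * k ∣ k ^ p := by
    rw [← pow_succ]; exact pow_dvd_pow k (Finset.mem_range.mp ht)
  rw [← Nat.mod_mul_right_div_self, ← Nat.mod_mul_right_div_self x, Nat.mod_mod_of_dvd _ hdvd]

theorem digitRev_succ (k p x : ℕ) :
    digitRev k (p + 1) x = k * digitRev k p x + x / k ^ p % k := by
  rw [digitRev, Finset.sum_range_succ, Nat.add_sub_cancel, Nat.sub_self, pow_zero, mul_one,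
    digitRev, Finset.mul_sum]
  congr 1
  refine Finset.sum_congr rfl fun t ht => ?_
  have ht : t < p := Finset.mem_range.mp ht
  rw [show p - t = p - 1 - t + 1 by omega, pow_succ]
  ring

theorem digitRev_succ' (k p x : ℕ) :
    digitRev k (p + 1) x = digitRev k p (x / k) + x % k * k ^ p := by
  rw [digitRev, Finset.sum_range_succ', digitRev]
  congr 1
  · refine Finset.sum_congr rfl fun t _ => ?_
    rw [show p + 1 - 1 - (t + 1) = p - 1 - t by omega, pow_succ', Nat.div_div_eq_div_mul]
  · simp

theorem digitRev_lt_pow {k : ℕ} (hk : 0 < k) (p x : ℕ) : digitRev k p x < k ^ p := by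
  induction p with
  | zero => simp [digitRev]
  | succ p ih =>
    calc digitRev k (p + 1) x = k * digitRev k p x + x / k ^ p % k := digitRev_succ k p x
      _ < k * digitRev k p x + k := by gcongr; exact Nat.mod_lt _ hk
      _ = k * (digitRev k p x + 1) := by ring
      _ ≤ k * k ^ p := by gcongr; exact ih
      _ = k ^ (p + 1) := (pow_succ' k p).symm

theorem digitRev_digitRev {k : ℕ} (hk : 0 < k) (p x : ℕ) :
    digitRev k p (digitRev k p x) = x % k ^ p := by
  induction p generalizing x with
  | zero => simp [digitRev, Nat.mod_one]
  | succ p ih =>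
    have hd : x / k ^ p % k < k := Nat.mod_lt _ hk
    rw [digitRev_succ k p x, digitRev_succ', Nat.mul_add_div hk, Nat.div_eq_of_lt hd, add_zero,
      Nat.mul_add_mod, Nat.mod_eq_of_lt hd, ih, Nat.mod_pow_succ, mul_comm]

theorem revP_of_lt {k p x : ℕ} (hx : x < k ^ p) : revP k p x = digitRev k p x := by
  rw [revP_eq, Nat.div_eq_of_lt hx, zero_mul, zero_add]

theorem revP_succ_revP {k p i : ℕ} (hk : 0 < k) (hi : i < k ^ (p + 1)) :
    revP k (p + 1) (revP k p i) = k * (i % k ^ p) + i / k ^ p := by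
  have hkp : 0 < k ^ p := Nat.pow_pos hk
  have hj : i / k ^ p < k := Nat.div_lt_of_lt_mul (by rwa [← pow_succ])
  set s := digitRev k p i
  have hs : s < k ^ p := digitRev_lt_pow hk p i
  have hlt : i / k ^ p * k ^ p + s < k ^ (p + 1) :=
    calc i / k ^ p * k ^ p + s < (i / k ^ p + 1) * k ^ p := by linarith
      _ ≤ k * k ^ p := by gcongr; exact hj
      _ = k ^ (p + 1) := (pow_succ' k p).symm
  rw [revP_eq k p i, revP_of_lt hlt, digitRev_succ, add_comm _ s, ← digitRev_mod_pow,
    Nat.add_mul_mod_self_right, Nat.mod_eq_of_lt hs, Nat.add_mul_div_right _ _ hkp,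
    Nat.div_eq_of_lt hs, zero_add, Nat.mod_eq_of_lt hj, digitRev_digitRev hk]

theorem mul_eq_div_pow_mul_add_rotate {k : ℕ} (hk : 0 < k) (p i : ℕ) :
    k * i = i / k ^ p * (k ^ (p + 1) - 1) + (k * (i % k ^ p) + i / k ^ p) := by
  have hK : 1 ≤ k ^ (p + 1) := Nat.one_le_pow _ _ hk
  zify [hK]
  have := Nat.div_add_mod i (k ^ p)
  zify at this
  rw [pow_succ]
  linear_combination k * this.symm

theorem rotate_lt_pow_sub_one {k p i : ℕ} (hi : i < k ^ (p + 1) - 1) :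
    k * (i % k ^ p) + i / k ^ p < k ^ (p + 1) - 1 := by
  have hk : 0 < k := Nat.pos_of_ne_zero (by rintro rfl; simp at hi)
  have hdiv := Nat.div_add_mod i (k ^ p)
  have hr : i % k ^ p < k ^ p := Nat.mod_lt i (Nat.pow_pos hk)
  rw [pow_succ'] at hi ⊢
  generalize i / k ^ p = j at *
  generalize i % k ^ p = r at *
  generalize k ^ p = m at *
  subst hdiv
  replace hi : m * j + r + 1 < k * m := by omega
  suffices k * r + j + 1 < k * m by omega
  rcases Nat.lt_or_ge (r + 1) m with hr' | hr'
  · have hj : j < k := by nlinarith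
    nlinarith
  · have hj : j + 1 < k := by nlinarith
    nlinarith

theorem revRev_eq_shuffle_general (k n : ℕ)
    (i : ℕ) (hi : i < k ^ n - 1) :
    revP k n (revP k (n - 1) i) = k * i % (k ^ n - 1) ∧
    revP k n (revP k (n - 1) i) = k * i - (i / k ^ (n - 1)) * (k ^ n - 1) := by
  obtain ⟨p, rfl⟩ : ∃ p, n = p + 1 := Nat.exists_eq_succ_of_ne_zero (by rintro rfl; simp at hi)
  have hk : 0 < k := Nat.pos_of_ne_zero (by rintro rfl; simp at hi)
  have hdecomp := mul_eq_div_pow_mul_add_rotate hk p i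
  rw [Nat.add_sub_cancel, revP_succ_revP hk (by omega), hdecomp, Nat.add_sub_cancel_left, Nat.mul_add_mod_self_right,
    Nat.mod_eq_of_lt (rotate_lt_pow_sub_one hi)]
  exact ⟨rfl, rfl⟩

/-- For `i < k^n - 1`, `rev_n (rev_{n-1} i) = k·i mod (k^n - 1)`; moreover, with
`j = ⌊i / k^{n-1}⌋` the leading digit, `rev_n (rev_{n-1} i) = k·i - j·(k^n - 1)`. -/
theorem revRev_eq_shuffle (k n : ℕ) (hk : 2 ≤ k) (hn : 1 ≤ n)
    (i : ℕ) (hi : i < k ^ n - 1) :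
    revP k n (revP k (n - 1) i) = k * i % (k ^ n - 1) ∧
    revP k n (revP k (n - 1) i) = k * i - (i / k ^ (n - 1)) * (k ^ n - 1) :=
  revRev_eq_shuffle_general k n i hi
end

section
/- Let k ≥ 2, n ≥ 1, and let i < k^n − 1. Let p be the number of trailing digits equal to k−1 in the n-digit base-k representation of i (equivalently, the position of the leftmost digit that changes when i is incremented). Then rev_n(i+1) = rev_n(i) − k^n + k^{n−p} + k^{n−p−1}. -/
open Finset

theorem revP_of_lt_s6 {k n i : ℕ} (h : i < k ^ n) :
    revP k n i = ∑ j ∈ range n, (i / k ^ j % k) * k ^ (n - 1 - j) := by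
  simp [revP, Nat.div_eq_of_lt h]

theorem sum_range_sub_one_mul_pow {R : Type*} [CommRing R] (x : R) {n p : ℕ} (h : p ≤ n) :
    ∑ j ∈ range p, (x - 1) * x ^ (n - 1 - j) = x ^ n - x ^ (n - p) := by
  induction p with
  | zero => simp
  | succ p ih =>
    rw [sum_range_succ, ih (by omega), show n - p = n - 1 - p + 1 by omega,
      show n - (p + 1) = n - 1 - p by omega]
    ring

namespace Nat

theorem succ_mod_of_mod_ne_pred {m k : ℕ} (h : m % k ≠ k - 1) : (m + 1) % k = m % k + 1 := by
  rcases k with _ | _ | k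
  · simp
  · simp [Nat.mod_one] at h
  · have hone : 1 % (k + 1 + 1) = 1 := Nat.mod_eq_of_lt (by omega)
    have := Nat.mod_lt m (by omega : 0 < k + 1 + 1)
    rw [Nat.add_mod_of_add_mod_lt (by omega), hone]

theorem succ_div_pow_of_mod_ne_pred {m k t : ℕ} (h : m % k ≠ k - 1) (ht : 0 < t) :
    (m + 1) / k ^ t = m / k ^ t := by
  obtain ⟨s, rfl⟩ : ∃ s, t = s + 1 := ⟨t - 1, by omega⟩
  have hndvd : ¬k ∣ m + 1 := by
    rw [Nat.dvd_iff_mod_eq_zero, succ_mod_of_mod_ne_pred h]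
    omega
  rw [pow_succ', ← Nat.div_div_eq_div_mul, ← Nat.div_div_eq_div_mul,
    Nat.succ_div_of_not_dvd hndvd]

theorem pow_mul_div_pow_mod_of_lt {k p j : ℕ} (hk : 0 < k) (hj : j < p) (c : ℕ) :
    k ^ p * c / k ^ j % k = 0 := by
  obtain ⟨a, rfl⟩ : ∃ a, p = j + 1 + a := ⟨p - j - 1, by omega⟩
  rw [show k ^ (j + 1 + a) * c = k ^ j * (k * (k ^ a * c)) by ring,
    Nat.mul_div_cancel_left _ (by positivity), Nat.mul_mod_right]

theorem pow_mul_div_pow_eq_div_div_pow_sub {k p j : ℕ} (hk : 0 < k) (hj : p ≤ j) (c : ℕ) :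
    k ^ p * c / k ^ j = c / k ^ (j - p) := by
  obtain ⟨a, rfl⟩ : ∃ a, j = p + a := ⟨j - p, by omega⟩
  rw [pow_add, Nat.mul_div_mul_left _ _ (by positivity), Nat.add_sub_cancel_left]

theorem div_pow_eq_div_div_pow_sub {k p j : ℕ} (hj : p ≤ j) (i : ℕ) :
    i / k ^ j = i / k ^ p / k ^ (j - p) := by
  rw [Nat.div_div_eq_div_mul, ← pow_add, Nat.add_sub_cancel' hj]

end Nat

section Increment

variable {k p i : ℕ}

theorem mod_pow_eq_pred_of_digits (hk : 0 < k) (h : ∀ j < p, i / k ^ j % k = k - 1) :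
    i % k ^ p = k ^ p - 1 := by
  induction p with
  | zero => simp [Nat.mod_one]
  | succ p ih =>
    rw [Nat.mod_pow_succ, ih fun j hj => h j (by omega), h p (by omega), Nat.mul_sub_one,
      pow_succ]
    have := Nat.one_le_pow p k hk
    have := Nat.le_mul_of_pos_right (k ^ p) hk
    omega

theorem succ_eq_pow_mul (hk : 0 < k) (h : ∀ j < p, i / k ^ j % k = k - 1) :
    i + 1 = k ^ p * (i / k ^ p + 1) := by
  have := Nat.div_add_mod i (k ^ p)
  have := mod_pow_eq_pred_of_digits hk h
  have := Nat.one_le_pow p k hk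
  rw [mul_add_one]
  omega

theorem lt_of_digits_eq_pred {n : ℕ} (hk : 0 < k) (hi : i < k ^ n - 1)
    (h : ∀ j < p, i / k ^ j % k = k - 1) : p < n := by
  by_contra! hnp
  have := mod_pow_eq_pred_of_digits hk h
  have := Nat.mod_le i (k ^ p)
  have := Nat.pow_le_pow_right hk hnp
  omega

theorem succ_div_pow_mod_of_lt (hk : 0 < k) (h : ∀ j < p, i / k ^ j % k = k - 1) {j : ℕ}
    (hj : j < p) : (i + 1) / k ^ j % k = 0 := by
  rw [succ_eq_pow_mul hk h, Nat.pow_mul_div_pow_mod_of_lt hk hj]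

theorem succ_div_pow_mod_self (hk : 0 < k) (h1 : ∀ j < p, i / k ^ j % k = k - 1)
    (h2 : i / k ^ p % k ≠ k - 1) : (i + 1) / k ^ p % k = i / k ^ p % k + 1 := by
  rw [succ_eq_pow_mul hk h1, Nat.mul_div_cancel_left _ (by positivity),
    Nat.succ_mod_of_mod_ne_pred h2]

theorem succ_div_pow_of_lt (hk : 0 < k) (h1 : ∀ j < p, i / k ^ j % k = k - 1)
    (h2 : i / k ^ p % k ≠ k - 1) {j : ℕ} (hj : p < j) : (i + 1) / k ^ j = i / k ^ j := by
  rw [succ_eq_pow_mul hk h1, Nat.pow_mul_div_pow_eq_div_div_pow_sub hk hj.le,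
    Nat.div_pow_eq_div_div_pow_sub hj.le i, Nat.succ_div_pow_of_mod_ne_pred h2 (by omega)]

end Increment

theorem revN_succ_general (k n : ℕ) (hk : 2 ≤ k)
    (i : ℕ) (hi : i < k ^ n - 1) (p : ℕ)
    (h1 : ∀ j < p, i / k ^ j % k = k - 1)
    (h2 : i / k ^ p % k ≠ k - 1) :
    (revP k n (i + 1) : ℤ) =
      (revP k n i : ℤ) - k ^ n + k ^ (n - p) + k ^ (n - p - 1) := by
  have hk0 : 0 < k := by omega
  have hpn : p < n := lt_of_digits_eq_pred hk0 hi h1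
  have hsplit (x : ℕ) : ∑ j ∈ range n, (x / k ^ j % k) * k ^ (n - 1 - j) =
      ∑ j ∈ range p, (x / k ^ j % k) * k ^ (n - 1 - j) + (x / k ^ p % k) * k ^ (n - 1 - p) +
        ∑ j ∈ Ico (p + 1) n, (x / k ^ j % k) * k ^ (n - 1 - j) := by
    rw [← sum_range_add_sum_Ico _ hpn, sum_range_succ]
  have hlow : ∑ j ∈ range p, ((i + 1) / k ^ j % k) * k ^ (n - 1 - j) = 0 :=
    sum_eq_zero fun j hj => by rw [succ_div_pow_mod_of_lt hk0 h1 (mem_range.mp hj), zero_mul]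
  have hhigh : ∑ j ∈ Ico (p + 1) n, ((i + 1) / k ^ j % k) * k ^ (n - 1 - j) =
      ∑ j ∈ Ico (p + 1) n, (i / k ^ j % k) * k ^ (n - 1 - j) :=
    sum_congr rfl fun j hj => by rw [succ_div_pow_of_lt hk0 h1 h2 (mem_Ico.mp hj).1]
  have hnines : ∑ j ∈ range p, (i / k ^ j % k) * k ^ (n - 1 - j) =
      ∑ j ∈ range p, (k - 1) * k ^ (n - 1 - j) :=
    sum_congr rfl fun j hj => by rw [h1 j (mem_range.mp hj)]
  rw [revP_of_lt_s6 (by omega), revP_of_lt_s6 (by omega), hsplit, hsplit, hlow, hhigh, hnines,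
    succ_div_pow_mod_self hk0 h1 h2]
  push_cast [Nat.cast_sub hk0]
  rw [sum_range_sub_one_mul_pow _ hpn.le, show n - p = n - 1 - p + 1 by omega,
    show n - 1 - p + 1 - 1 = n - 1 - p by omega, pow_succ]
  ring

/-- If the `n`-digit base-`k` representation of `i` has exactly `p` trailing digits
equal to `k - 1`, then `rev_n (i+1) = rev_n i - k^n + k^{n-p} + k^{n-p-1}`
(as integers). -/
theorem revN_succ (k n : ℕ) (hk : 2 ≤ k) (hn : 1 ≤ n)
    (i : ℕ) (hi : i < k ^ n - 1) (p : ℕ)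
    (h1 : ∀ j < p, i / k ^ j % k = k - 1)
    (h2 : i / k ^ p % k ≠ k - 1) :
    (revP k n (i + 1) : ℤ) =
      (revP k n i : ℤ) - k ^ n + k ^ (n - p) + k ^ (n - p - 1) :=
  revN_succ_general k n hk i hi p h1 h2
end

section
/- Let m ≥ 1 and suppose gcd(r, m) = gcd(s, m) = 1. With J_r as defined (J_r(x) = g·((r·(x/g)^{-1}) mod (m/g)) where g = gcd(x,m)), we have for all x: J_r(J_s(x)) ≡ x·r·s^{-1} (mod m), where s^{-1} is an inverse of s modulo m. In particular J_r(J_r(x)) ≡ x, so J_r is an involution on {0,...,m−1}. -/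
/-!
Write `g = gcd x m` and `u = x / g`, a unit modulo `m / g`. Then `J_s x = g * (s u⁻¹)`, and since
`s u⁻¹` is again a unit modulo `m / g`, `gcd (J_s x) m = g`. So the outer `J_r` works with the
same `g` and inverts `s u⁻¹`, giving `J_r (J_s x) = g * (r u s⁻¹)`; both claims are then
arithmetic in `ZMod (m / g)`.
-/

/-- `Jfun m r x = g * ((r * (x/g)⁻¹) mod (m/g))` where `g = gcd x m` and the
inverse is taken modulo `m / g`. -/
def Jfun (m r x : ℕ) : ℕ :=
  Nat.gcd x m *
    (((r : ZMod (m / Nat.gcd x m)) * (↑(x / Nat.gcd x m) : ZMod (m / Nat.gcd x m))⁻¹).val)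

lemma ZMod.isUnit_inv_of_isUnit {n : ℕ} {a : ZMod n} (ha : IsUnit a) : IsUnit a⁻¹ :=
  IsUnit.of_mul_eq_one _ (ZMod.inv_mul_of_unit a ha)

lemma ZMod.isUnit_natCast_of_coprime_of_dvd {m d s : ℕ} (hs : s.Coprime m) (hd : d ∣ m) :
    IsUnit (s : ZMod d) :=
  (ZMod.isUnit_iff_coprime _ _).2 (hs.coprime_dvd_right hd)

lemma Nat.gcd_mul_val_of_isUnit {m g : ℕ} (hg : g ∣ m) {a : ZMod (m / g)} (ha : IsUnit a) :
    (g * a.val).gcd m = g := by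
  have h := Nat.gcd_mul_left g a.val (m / g)
  have hcop : a.val.Coprime (m / g) := ha.unit_spec ▸ ZMod.val_coe_unit_coprime ha.unit
  rwa [Nat.mul_div_cancel' hg, hcop, mul_one] at h

section Jfun

variable {m r s x : ℕ} [NeZero m]

instance neZero_div_gcd : NeZero (m / x.gcd m) :=
  ⟨(Nat.div_pos (Nat.le_of_dvd (Nat.pos_of_ne_zero (NeZero.ne m)) (Nat.gcd_dvd_right x m))
    (Nat.gcd_pos_of_pos_right x (Nat.pos_of_ne_zero (NeZero.ne m)))).ne'⟩

lemma isUnit_natCast_div_gcd : IsUnit ((x / x.gcd m : ℕ) : ZMod (m / x.gcd m)) :=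
  (ZMod.isUnit_iff_coprime _ _).2 <| Nat.coprime_div_gcd_div_gcd <|
    Nat.gcd_pos_of_pos_right x (Nat.pos_of_ne_zero (NeZero.ne m))

lemma isUnit_Jfun_coeff (hs : s.Coprime m) :
    IsUnit ((s : ZMod (m / x.gcd m)) * ((x / x.gcd m : ℕ) : ZMod (m / x.gcd m))⁻¹) :=
  (ZMod.isUnit_natCast_of_coprime_of_dvd hs (Nat.div_dvd_of_dvd (Nat.gcd_dvd_right x m))).mul
    (ZMod.isUnit_inv_of_isUnit isUnit_natCast_div_gcd)

lemma gcd_Jfun (hs : s.Coprime m) : (Jfun m s x).gcd m = x.gcd m :=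
  Nat.gcd_mul_val_of_isUnit (Nat.gcd_dvd_right x m) (isUnit_Jfun_coeff hs)

lemma Jfun_div_gcd : Jfun m s x / x.gcd m =
    ((s : ZMod (m / x.gcd m)) * ((x / x.gcd m : ℕ) : ZMod (m / x.gcd m))⁻¹).val :=
  Nat.mul_div_cancel_left _ (Nat.gcd_pos_of_pos_right x (Nat.pos_of_ne_zero (NeZero.ne m)))

theorem Jfun_Jfun (hs : s.Coprime m) :
    Jfun m r (Jfun m s x) = x.gcd m *
      ((r : ZMod (m / x.gcd m)) * (x / x.gcd m : ℕ) * (s : ZMod (m / x.gcd m))⁻¹).val := by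
  set u : ZMod (m / x.gcd m) := ((x / x.gcd m : ℕ) : ZMod (m / x.gcd m))
  have hs' := ZMod.isUnit_natCast_of_coprime_of_dvd hs
    (Nat.div_dvd_of_dvd (Nat.gcd_dvd_right x m))
  have hinv : ((s : ZMod (m / x.gcd m)) * u⁻¹)⁻¹ = u * (s : ZMod (m / x.gcd m))⁻¹ := by
    refine ZMod.inv_eq_of_mul_eq_one _ _ _ ?_
    calc (s : ZMod (m / x.gcd m)) * u⁻¹ * (u * (s : ZMod (m / x.gcd m))⁻¹)
        = (s * (s : ZMod (m / x.gcd m))⁻¹) * (u⁻¹ * u) := by ring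
      _ = 1 := by
        rw [ZMod.mul_inv_of_unit _ hs', ZMod.inv_mul_of_unit _ isUnit_natCast_div_gcd, one_mul]
  rw [Jfun, gcd_Jfun hs, Jfun_div_gcd, ZMod.natCast_zmod_val, hinv, mul_assoc]

theorem Jfun_Jfun_modEq (hs : s.Coprime m) {t : ℕ} (ht : s * t ≡ 1 [MOD m]) :
    Jfun m r (Jfun m s x) ≡ x * r * t [MOD m] := by
  set g := x.gcd m
  have hg : g ∣ m := Nat.gcd_dvd_right x m
  have hst : (s : ZMod (m / g))⁻¹ = t := by
    refine ZMod.inv_eq_of_mul_eq_one _ _ _ ?_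
    exact_mod_cast (ZMod.natCast_eq_natCast_iff _ _ _).2 (ht.of_dvd (Nat.div_dvd_of_dvd hg))
  have hred : ((r : ZMod (m / g)) * (x / g : ℕ) * (s : ZMod (m / g))⁻¹).val
      ≡ x / g * r * t [MOD m / g] := by
    rw [← ZMod.natCast_eq_natCast_iff, ZMod.natCast_zmod_val, hst]
    push_cast
    ring
  have hx : g * (x / g * r * t) = x * r * t := by
    rw [← mul_assoc, ← mul_assoc, Nat.mul_div_cancel' (Nat.gcd_dvd_left x m)]
  rw [Jfun_Jfun hs, ← hx]
  simpa only [Nat.mul_div_cancel' hg] using hred.mul_left' g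

theorem Jfun_Jfun_self (hr : r.Coprime m) (hx : x < m) : Jfun m r (Jfun m r x) = x := by
  have hr' := ZMod.isUnit_natCast_of_coprime_of_dvd hr
    (Nat.div_dvd_of_dvd (Nat.gcd_dvd_right x m))
  rw [Jfun_Jfun hr, mul_right_comm, ZMod.mul_inv_of_unit _ hr', one_mul, ZMod.val_natCast,
    Nat.mod_eq_of_lt (Nat.div_lt_div_of_lt_of_dvd (Nat.gcd_dvd_right x m) hx),
    Nat.mul_div_cancel' (Nat.gcd_dvd_left x m)]

end Jfun

/-- `J_r (J_s x) ≡ x·r·s⁻¹ (mod m)`; in particular `J_r` is an involution on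
`{0, ..., m-1}`. -/
theorem Jfun_comp (m r s : ℕ) (hm : 1 ≤ m)
    (hr : Nat.gcd r m = 1) (hs : Nat.gcd s m = 1)
    (x : ℕ) (hx : x < m) (t : ℕ) (ht : s * t ≡ 1 [MOD m]) :
    Jfun m r (Jfun m s x) ≡ x * r * t [MOD m] ∧
    Jfun m r (Jfun m r x) = x := by
  have : NeZero m := ⟨by omega⟩
  exact ⟨Jfun_Jfun_modEq hs ht, Jfun_Jfun_self hr hx⟩
end

section
/- Let N = kM with k ≥ 2, M ≥ 1, and m = kM − 1. Then gcd(k, m) = 1, and the maps J_1 and J_k (with J_r(x) = g·((r·(x/g)^{-1}) mod (m/g)), g = gcd(x,m)) are involutions on {0,...,m−1} satisfying J_k(J_1(x)) ≡ k·x (mod m) for all x. Hence the k-way perfect shuffle on N elements is the product of two explicit involutions. -/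
lemma Nat.coprime_sub_one_of_dvd {k n : ℕ} (hn : 0 < n) (hk : k ∣ n) : k.Coprime (n - 1) :=
  Nat.Coprime.coprime_dvd_left hk <|
    (Nat.coprime_self_sub_right hn).2 (Nat.coprime_one_right n)

lemma Nat.modEq_of_cast_div_eq {m g a b : ℕ} (hm : g ∣ m) (ha : g ∣ a) (hb : g ∣ b)
    (h : ((a / g : ℕ) : ZMod (m / g)) = ((b / g : ℕ) : ZMod (m / g))) : a ≡ b [MOD m] := by
  have := Nat.ModEq.mul_left' g ((ZMod.natCast_eq_natCast_iff _ _ _).1 h)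
  rwa [Nat.mul_div_cancel' ha, Nat.mul_div_cancel' hb, Nat.mul_div_cancel' hm] at this

namespace Jfun

variable {m : ℕ}

lemma neZero_div_gcd (hm : 0 < m) (x : ℕ) : NeZero (m / Nat.gcd x m) :=
  ⟨(Nat.div_pos (Nat.gcd_le_right x hm) (Nat.gcd_pos_of_pos_right x hm)).ne'⟩

lemma isUnit_div_gcd (hm : 0 < m) (x : ℕ) :
    IsUnit ((x / Nat.gcd x m : ℕ) : ZMod (m / Nat.gcd x m)) :=
  (ZMod.isUnit_iff_coprime _ _).2 (Nat.coprime_div_gcd_div_gcd (Nat.gcd_pos_of_pos_right x hm))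

lemma gcd_dvd (m r x : ℕ) : Nat.gcd x m ∣ Jfun m r x :=
  Dvd.intro _ rfl

lemma div_gcd (hm : 0 < m) (r x : ℕ) :
    Jfun m r x / Nat.gcd x m =
      ((r : ZMod (m / Nat.gcd x m)) *
        ((x / Nat.gcd x m : ℕ) : ZMod (m / Nat.gcd x m))⁻¹).val :=
  Nat.mul_div_cancel_left _ (Nat.gcd_pos_of_pos_right x hm)

lemma cast_div_gcd (hm : 0 < m) (r x : ℕ) :
    ((Jfun m r x / Nat.gcd x m : ℕ) : ZMod (m / Nat.gcd x m)) =
      r * ((x / Nat.gcd x m : ℕ) : ZMod (m / Nat.gcd x m))⁻¹ := by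
  have := neZero_div_gcd hm x
  rw [div_gcd hm, ZMod.natCast_zmod_val]

lemma cast_div_gcd_mul (hm : 0 < m) (r x : ℕ) :
    ((Jfun m r x / Nat.gcd x m : ℕ) : ZMod (m / Nat.gcd x m)) *
      ((x / Nat.gcd x m : ℕ) : ZMod (m / Nat.gcd x m)) = r := by
  rw [cast_div_gcd hm, mul_assoc, ZMod.inv_mul_of_unit _ (isUnit_div_gcd hm x), mul_one]

lemma lt (hm : 0 < m) (r x : ℕ) : Jfun m r x < m := by
  have := neZero_div_gcd hm x
  calc Jfun m r x < Nat.gcd x m * (m / Nat.gcd x m) :=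
        Nat.mul_lt_mul_of_pos_left (ZMod.val_lt _) (Nat.gcd_pos_of_pos_right x hm)
    _ = m := Nat.mul_div_cancel' (Nat.gcd_dvd_right x m)

lemma gcd_eq (hm : 0 < m) {r : ℕ} (hr : r.Coprime m) (x : ℕ) :
    Nat.gcd (Jfun m r x) m = Nat.gcd x m := by
  set g := Nat.gcd x m
  have hr' : IsUnit (r : ZMod (m / g)) := (ZMod.isUnit_iff_coprime r _).2
    (hr.coprime_dvd_right (Nat.div_dvd_of_dvd (Nat.gcd_dvd_right x m)))
  have hx' : IsUnit ((x / g : ℕ) : ZMod (m / g))⁻¹ :=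
    IsUnit.of_mul_eq_one _ (ZMod.inv_mul_of_unit _ (isUnit_div_gcd hm x))
  have hunit := hr'.mul hx'
  have hcop := ZMod.val_coe_unit_coprime hunit.unit
  rw [hunit.unit_spec] at hcop
  change Nat.gcd (g * _) m = g
  conv_rhs => rw [← Nat.mul_one g]
  rw [← hcop, ← Nat.gcd_mul_left, Nat.mul_div_cancel' (Nat.gcd_dvd_right x m)]

lemma mul_modEq (hm : 0 < m) {r : ℕ} (hr : r.Coprime m) (s x : ℕ) :
    Jfun m s (Jfun m r x) * r ≡ s * x [MOD m] := by
  set g := Nat.gcd x m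
  set y := Jfun m r x
  have hg : Nat.gcd y m = g := gcd_eq hm hr x
  have hyg : g ∣ Jfun m s y := hg ▸ gcd_dvd m s y
  have hy_unit : IsUnit ((y / g : ℕ) : ZMod (m / g)) := hg ▸ isUnit_div_gcd hm y
  have hsy : ((Jfun m s y / g : ℕ) : ZMod (m / g)) = s * ((y / g : ℕ) : ZMod (m / g))⁻¹ :=
    hg ▸ cast_div_gcd hm s y
  have hyx : ((y / g : ℕ) : ZMod (m / g)) * ((x / g : ℕ) : ZMod (m / g)) = r :=
    cast_div_gcd_mul hm r x
  refine Nat.modEq_of_cast_div_eq (Nat.gcd_dvd_right x m) (hyg.mul_right r)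
    ((Nat.gcd_dvd_left x m).mul_left s) ?_
  rw [Nat.mul_div_right_comm hyg, Nat.mul_div_assoc s (Nat.gcd_dvd_left x m), Nat.cast_mul,
    Nat.cast_mul, hsy, ← hyx]
  linear_combination (s * ((x / g : ℕ) : ZMod (m / g))) * ZMod.inv_mul_of_unit _ hy_unit

lemma involutive_of_lt (hm : 0 < m) {r : ℕ} (hr : r.Coprime m) {x : ℕ} (hx : x < m) :
    Jfun m r (Jfun m r x) = x := by
  have h := (mul_modEq hm hr r x).trans (by rw [Nat.mul_comm])
  exact (Nat.ModEq.cancel_right_of_coprime (Nat.coprime_comm.1 hr) h).eq_of_lt_of_lt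
    (lt hm r _) hx

end Jfun

/-- With `N = k·M` and `m = k·M - 1`, we have `gcd k m = 1`, the maps `J_1` and
`J_k` are involutions on `{0, ..., m-1}`, and `J_k (J_1 x) ≡ k·x (mod m)`:
the `k`-way perfect shuffle is the product of two explicit involutions. -/
theorem shuffle_product_involutions (k M : ℕ) (hk : 2 ≤ k) (hM : 1 ≤ M) :
    Nat.gcd k (k * M - 1) = 1 ∧
    (∀ x < k * M - 1, Jfun (k * M - 1) 1 (Jfun (k * M - 1) 1 x) = x) ∧
    (∀ x < k * M - 1, Jfun (k * M - 1) k (Jfun (k * M - 1) k x) = x) ∧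
    (∀ x < k * M - 1,
      Jfun (k * M - 1) k (Jfun (k * M - 1) 1 x) ≡ k * x [MOD k * M - 1]) := by
  have hkM : 2 ≤ k * M := Nat.mul_le_mul hk hM
  have hm : 0 < k * M - 1 := by omega
  have hkm : k.Coprime (k * M - 1) :=
    Nat.coprime_sub_one_of_dvd (by omega) (Nat.dvd_mul_right k M)
  have h1 : (1 : ℕ).Coprime (k * M - 1) := Nat.coprime_one_left _
  refine ⟨hkm, fun x hx => Jfun.involutive_of_lt hm h1 hx,
    fun x hx => Jfun.involutive_of_lt hm hkm hx, fun x _ => ?_⟩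
  simpa only [Nat.mul_one] using Jfun.mul_modEq hm h1 k x
end

section
/- Let C_n(x) = x+1 mod n on {0,...,n−1}. If S is an involution of {0,...,n−1} satisfying S ∘ T = C_n for some involution T, then S is of the form S(x) = k − x (mod n) for some fixed k. -/
/-- Any involution `S` with `S * T = C_n` for some involution `T` (where
`C_n x = x + 1` on `ZMod n`) satisfies `S x + S y = x + y` whenever `S x = y`,
and indeed `S x = k - x` for some fixed `k`. -/
theorem involution_factor_of_cycle (n : ℕ) (hn : 1 ≤ n)
    (S T : Equiv.Perm (ZMod n)) (hS : S * S = 1) (hT : T * T = 1)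
    (h : S * T = Equiv.addRight (1 : ZMod n)) :
    (∀ x y : ZMod n, S x = y → S x + S y = x + y) ∧
    ∃ k : ZMod n, ∀ x : ZMod n, S x = k - x := by
  have hSS : ∀ x : ZMod n, S (S x) = x := by
    intro x
    have := congrArg (fun p => p x) hS
    simpa [Equiv.Perm.mul_apply] using this
  have hTT : ∀ x : ZMod n, T (T x) = x := by
    intro x
    have := congrArg (fun p => p x) hT
    simpa [Equiv.Perm.mul_apply] using this
  have hST : ∀ x : ZMod n, S (T x) = x + 1 := by
    intro x
    have := congrArg (fun p => p x) h
    simpa [Equiv.Perm.mul_apply] using this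
  have hTx : ∀ x : ZMod n, T x = S (x + 1) := by
    intro x
    have := congrArg S (hST x)
    rw [hSS] at this
    exact this
  have hstep : ∀ x : ZMod n, S (x + 1) = S x - 1 := by
    intro x
    have h1 : T (S (x + 1)) = x := by rw [← hTx]; exact hTT x
    rw [hTx (S (x + 1))] at h1
    have h2 := congrArg S h1
    rw [hSS] at h2
    -- h2 : S (x + 1) + 1 = S x
    linear_combination h2
  have key : ∀ x : ZMod n, S x = S 0 - x := by
    have nat_key : ∀ m : ℕ, S (m : ZMod n) = S 0 - m := by
      intro m
      induction m with
      | zero => simp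
      | succ k ih =>
        push_cast
        rw [hstep, ih]
        ring
    intro x
    haveI : NeZero n := ⟨by omega⟩
    have := nat_key x.val
    simpa [ZMod.natCast_val, ZMod.cast_id] using this
  refine ⟨?_, S 0, key⟩
  intro x y hxy
  have hy : S y = x := by rw [← hxy, hSS]
  rw [hxy, hy]; ring
end
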